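/- Let G be a finite abelian group, H a subgroup of G, and E ⊆ H. Then E tiles G by translations if and only if E tiles H by translations. -/

import Mathlib

/-- `E` tiles the abelian group `G` with translate set `T`. -/
def Tiles {G : Type*} [AddCommGroup G] (E T : Finset G) : Prop :=
  ∀ x : G, ∃! p : G × G, p.1 ∈ E ∧ p.2 ∈ T ∧ x = p.1 + p.2

/-!
If `E ⊕ T = G` with `E ⊆ H`, then for `x ∈ H` the translate `t = x - e` lies in `H`, so the
translates in `T ∩ H` tile `H`. Conversely, if `E ⊕ T = H` and `R` is a transversal of `H` in
`G`, then `E ⊕ (T + R) = G`: the coset `x + H` determines `r ∈ R`, and then `x - r ∈ H`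
determines `(e, t)`.
-/

open scoped Pointwise

section

variable {G : Type*} [AddCommGroup G]

theorem AddSubgroup.exists_finset_existsUnique_sub_mem (H : AddSubgroup G) [Finite (G ⧸ H)] :
    ∃ R : Finset G, ∀ x, ∃! r ∈ R, x - r ∈ H := by
  classical
  have := Fintype.ofFinite (G ⧸ H)
  refine ⟨Finset.univ.image Quotient.out, fun x =>
    ⟨(x : G ⧸ H).out, ⟨Finset.mem_image_of_mem _ (Finset.mem_univ _), ?_⟩, ?_⟩⟩
  · rw [← QuotientAddGroup.eq_iff_sub_mem, QuotientAddGroup.out_eq']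
  · rintro _ ⟨hr, hxr⟩
    obtain ⟨q, -, rfl⟩ := Finset.mem_image.mp hr
    rw [← QuotientAddGroup.eq_iff_sub_mem, QuotientAddGroup.out_eq'] at hxr
    rw [hxr]

theorem tiles_subgroup_of_tiles {H : AddSubgroup G} [DecidablePred (· ∈ H)] {E T : Finset G}
    (hE : ∀ e ∈ E, e ∈ H) (hT : Tiles E T) :
    ∀ x ∈ H, ∃! p : G × G, p.1 ∈ E ∧ p.2 ∈ T.filter (· ∈ H) ∧ x = p.1 + p.2 := by
  intro x hx
  obtain ⟨⟨e, t⟩, ⟨he, ht, rfl⟩, huniq⟩ := hT x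
  have htH : t ∈ H := by simpa using H.sub_mem hx (hE e he)
  exact ⟨(e, t), ⟨he, Finset.mem_filter.mpr ⟨ht, htH⟩, rfl⟩,
    fun p ⟨hp₁, hp₂, hp⟩ => huniq p ⟨hp₁, (Finset.mem_filter.mp hp₂).1, hp⟩⟩

theorem tiles_add_of_tiles_subgroup [DecidableEq G] {H : AddSubgroup G} {E T R : Finset G}
    (hE : ∀ e ∈ E, e ∈ H) (hTH : ∀ t ∈ T, t ∈ H)
    (hT : ∀ x ∈ H, ∃! p : G × G, p.1 ∈ E ∧ p.2 ∈ T ∧ x = p.1 + p.2)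
    (hR : ∀ x, ∃! r ∈ R, x - r ∈ H) : Tiles E (T + R) := by
  intro x
  obtain ⟨r, ⟨hr, hxr⟩, hr_unique⟩ := hR x
  obtain ⟨⟨e, t⟩, ⟨he, ht, hxet⟩, het_unique⟩ := hT (x - r) hxr
  refine ⟨(e, t + r),
    ⟨he, Finset.add_mem_add ht hr, by rw [← add_assoc, ← hxet, sub_add_cancel]⟩, ?_⟩
  rintro ⟨e', s⟩ ⟨he', hs, hx⟩
  obtain ⟨t', ht', r', hr', rfl⟩ := Finset.mem_add.mp hs
  have hsub : x - r' = e' + t' := by rw [hx]; dsimp only; abel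
  obtain rfl : r' = r := hr_unique r' ⟨hr', hsub ▸ H.add_mem (hE e' he') (hTH t' ht')⟩
  obtain ⟨rfl, rfl⟩ := Prod.ext_iff.mp (het_unique (e', t') ⟨he', ht', hsub⟩)
  rfl

end

theorem tiles_group_iff_tiles_subgroup {G : Type*} [AddCommGroup G] [Fintype G]
    (H : AddSubgroup G) (E : Finset G) (hE : ∀ e ∈ E, e ∈ H) :
    (∃ T : Finset G, Tiles E T) ↔
      (∃ T : Finset G, (∀ t ∈ T, t ∈ H) ∧
        ∀ x ∈ H, ∃! p : G × G, p.1 ∈ E ∧ p.2 ∈ T ∧ x = p.1 + p.2) := by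
  classical
  constructor
  · rintro ⟨T, hT⟩
    exact ⟨T.filter (· ∈ H), fun t ht => (Finset.mem_filter.mp ht).2,
      tiles_subgroup_of_tiles hE hT⟩
  · rintro ⟨T, hTH, hT⟩
    obtain ⟨R, hR⟩ := H.exists_finset_existsUnique_sub_mem
    exact ⟨T + R, tiles_add_of_tiles_subgroup hE hTH hT hR⟩
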